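/- (Superstability bound.) For every β > 0 and μ ∈ ℝ there exist constants M > 0 and B > 0 such that: (i) for all x ≥ M and y ≥ M one has μ(y + x) − f₀ᴮ(β,y,x) − (λ₀/2)(y + x)² ≤ −B(y + x); and (ii) every maximizer (x_μ, y_μ) of the variational problem sup_{x ≥ 0, y ≥ 0} { μ(y + x) − f₀ᴮ(β,y,x) − (λ₀/2)(y + x)² } satisfies x_μ < M and y_μ < M. -/

import Mathlib

open MeasureTheory Real Filter Set

/-!
Choosing `α = -a < 0` in the Legendre transform gives `-f₀ᴮ(β,y,x) ≤ a y + C + (λ₀/4) x²`.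
Once `α` is bounded away from `0`, the thermal integrand `-log(1 - e^{-βE_k})`, with
`E_k = bogoliubovEnergy`, is dominated by a multiple of the Gaussian `e^{-βε_k}`, and the
ground-state integrand `ε_k - α + xλ(k) - E_k` by `x² λ(k)² / a`, which is integrable since
`λ ∈ L²` and costs at most `(λ₀/4) x²` for `a` large. So with `s = x + y` the functional is at
most `(|μ| + a) s + C - (λ₀/4) s² ≤ -s` for `s ≥ M`, whereas its value `-f₀ᴮ(β,0,0)` at the
origin is nonnegative: maximizers have `s < M`.
-/

/-- One-particle energy `ε_k = ‖k‖²/2` (units `ħ = m = 1`). -/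
noncomputable def eps (k : EuclideanSpace ℝ (Fin 3)) : ℝ := ‖k‖ ^ 2 / 2

/-- Pressure of the Bogoliubov approximation `p₀ᴮ(β,α,x)`. -/
noncomputable def p0B (lam : EuclideanSpace ℝ (Fin 3) → ℝ) (β α x : ℝ) : ℝ :=
  α * x
    - (β * (2 * π) ^ 3)⁻¹ *
        (∫ k : EuclideanSpace ℝ (Fin 3),
          Real.log (1 - Real.exp (-(β * Real.sqrt ((eps k - α) * (eps k - α + 2 * x * lam k))))))
    + (2 * (2 * π) ^ 3)⁻¹ *
        (∫ k : EuclideanSpace ℝ (Fin 3),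
          (eps k - α + x * lam k - Real.sqrt ((eps k - α) * (eps k - α + 2 * x * lam k))))

/-- Legendre–Fenchel transform `f₀ᴮ(β,y,x) = sup_{α ≤ 0} {α(y+x) − p₀ᴮ(β,α,x)}`. -/
noncomputable def f0B (lam : EuclideanSpace ℝ (Fin 3) → ℝ) (β y x : ℝ) : ℝ :=
  sSup {v : ℝ | ∃ α ≤ (0 : ℝ), v = α * (y + x) - p0B lam β α x}

lemma le_sqrt_mul_add_two_mul {a b : ℝ} (ha : 0 ≤ a) (hb : 0 ≤ b) :
    a ≤ √(a * (a + 2 * b)) :=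
  Real.le_sqrt_of_sq_le (by nlinarith)

lemma sqrt_mul_add_two_mul_le {a b : ℝ} (ha : 0 ≤ a) (hb : 0 ≤ b) :
    √(a * (a + 2 * b)) ≤ a + b :=
  (Real.sqrt_le_left (by positivity)).2 (by nlinarith)

lemma add_sub_sqrt_mul_add_two_mul_le {a b : ℝ} (ha : 0 < a) (hb : 0 ≤ b) :
    a + b - √(a * (a + 2 * b)) ≤ b ^ 2 / a := by
  have hs := Real.sq_sqrt (show 0 ≤ a * (a + 2 * b) by positivity)
  have hle := sqrt_mul_add_two_mul_le ha.le hb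
  rw [le_div_iff₀ ha]
  nlinarith [Real.sqrt_nonneg (a * (a + 2 * b))]

lemma neg_log_one_sub_exp_neg_nonneg {t : ℝ} (ht : 0 ≤ t) : 0 ≤ -log (1 - exp (-t)) := by
  have := exp_pos (-t)
  have : exp (-t) ≤ 1 := exp_le_one_iff.2 (by linarith)
  exact neg_nonneg.2 (log_nonpos (by linarith) (by linarith))

lemma neg_log_one_sub_exp_neg_le {s t : ℝ} (hs : 0 < s) (hst : s ≤ t) :
    -log (1 - exp (-t)) ≤ exp (-t) / (1 - exp (-s)) := by
  have hs1 : 0 < 1 - exp (-s) := sub_pos.2 (exp_lt_one_iff.2 (by linarith))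
  have ht1 : 1 - exp (-s) ≤ 1 - exp (-t) := by gcongr
  have hlog := one_sub_inv_le_log_of_pos (hs1.trans_le ht1)
  calc -log (1 - exp (-t)) ≤ exp (-t) / (1 - exp (-t)) := by
        have hu : exp (-t) / (1 - exp (-t)) = (1 - exp (-t))⁻¹ - 1 := by
          field_simp [(hs1.trans_le ht1).ne']
          ring
        linarith
    _ ≤ exp (-t) / (1 - exp (-s)) := by gcongr

lemma eps_nonneg (k : EuclideanSpace ℝ (Fin 3)) : 0 ≤ eps k := by
  unfold eps; positivity

lemma integrable_exp_neg_mul_eps {β : ℝ} (hβ : 0 < β) :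
    Integrable (fun k : EuclideanSpace ℝ (Fin 3) => exp (-(β * eps k))) := by
  have hβ2 : 0 < β / 2 := by positivity
  refine Integrable.of_integral_ne_zero ?_
  simp only [eps, show ∀ r : ℝ, -(β * (r / 2)) = -(β / 2) * r from fun r => by ring]
  rw [GaussianFourier.integral_rexp_neg_mul_sq_norm hβ2]
  positivity

noncomputable def bogoliubovEnergy (lam : EuclideanSpace ℝ (Fin 3) → ℝ) (α x : ℝ)
    (k : EuclideanSpace ℝ (Fin 3)) : ℝ :=
  √((eps k - α) * (eps k - α + 2 * x * lam k))

section Bogoliubov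

variable {lam : EuclideanSpace ℝ (Fin 3) → ℝ} {β α x : ℝ} {k : EuclideanSpace ℝ (Fin 3)}

lemma p0B_eq :
    p0B lam β α x = α * x
      + (β * (2 * π) ^ 3)⁻¹ * (∫ k, -log (1 - exp (-(β * bogoliubovEnergy lam α x k))))
      + (2 * (2 * π) ^ 3)⁻¹ * ∫ k, (eps k - α + x * lam k - bogoliubovEnergy lam α x k) := by
  rw [integral_neg, p0B]
  simp only [bogoliubovEnergy]
  ring

lemma sub_le_bogoliubovEnergy (hα : α ≤ 0) (hx : 0 ≤ x) (hlam : 0 ≤ lam k) :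
    eps k - α ≤ bogoliubovEnergy lam α x k := by
  rw [bogoliubovEnergy, mul_assoc 2]
  exact le_sqrt_mul_add_two_mul (by linarith [eps_nonneg k]) (by positivity)

lemma bogoliubovEnergy_le (hα : α ≤ 0) (hx : 0 ≤ x) (hlam : 0 ≤ lam k) :
    bogoliubovEnergy lam α x k ≤ eps k - α + x * lam k := by
  rw [bogoliubovEnergy, mul_assoc 2]
  exact sqrt_mul_add_two_mul_le (by linarith [eps_nonneg k]) (by positivity)

lemma mul_le_p0B (hβ : 0 ≤ β) (hα : α ≤ 0) (hx : 0 ≤ x) (hlam : ∀ k, 0 ≤ lam k) :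
    α * x ≤ p0B lam β α x := by
  have hthermal : 0 ≤ ∫ k, -log (1 - exp (-(β * bogoliubovEnergy lam α x k))) :=
    integral_nonneg fun k =>
      neg_log_one_sub_exp_neg_nonneg (mul_nonneg hβ (Real.sqrt_nonneg _))
  have hground : 0 ≤ ∫ k, (eps k - α + x * lam k - bogoliubovEnergy lam α x k) :=
    integral_nonneg fun k => sub_nonneg.2 (bogoliubovEnergy_le hα hx (hlam k))
  rw [p0B_eq]
  have := mul_nonneg (inv_nonneg.2 (by positivity : (0:ℝ) ≤ β * (2 * π) ^ 3)) hthermal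
  have := mul_nonneg (inv_nonneg.2 (by positivity : (0:ℝ) ≤ 2 * (2 * π) ^ 3)) hground
  linarith

lemma integral_neg_log_le (hβ : 0 < β) (hα : α < 0) (hx : 0 ≤ x) (hlam : ∀ k, 0 ≤ lam k) :
    ∫ k, -log (1 - exp (-(β * bogoliubovEnergy lam α x k)))
      ≤ (∫ k, exp (-(β * eps k))) / (1 - exp (β * α)) := by
  rw [← integral_div]
  refine integral_mono_of_nonneg (ae_of_all _ fun k => ?_)
    ((integrable_exp_neg_mul_eps hβ).div_const _) (ae_of_all _ fun k => ?_)
  · exact neg_log_one_sub_exp_neg_nonneg (mul_nonneg hβ.le (Real.sqrt_nonneg _))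
  · have hE := sub_le_bogoliubovEnergy (k := k) hα.le hx (hlam k)
    have hε := eps_nonneg k
    calc -log (1 - exp (-(β * bogoliubovEnergy lam α x k)))
        ≤ exp (-(β * bogoliubovEnergy lam α x k)) / (1 - exp (-(β * -α))) :=
          neg_log_one_sub_exp_neg_le (by nlinarith) (by nlinarith)
      _ ≤ exp (-(β * eps k)) / (1 - exp (β * α)) := by
          rw [mul_neg, neg_neg]
          have : 0 < 1 - exp (β * α) := sub_pos.2 (exp_lt_one_iff.2 (by nlinarith))
          gcongr
          nlinarith

lemma integral_groundState_le (hα : α < 0) (hx : 0 ≤ x) (hlam : ∀ k, 0 ≤ lam k)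
    (hlam2 : MemLp lam 2 volume) :
    ∫ k, (eps k - α + x * lam k - bogoliubovEnergy lam α x k)
      ≤ x ^ 2 / (-α) * ∫ k, lam k ^ 2 := by
  rw [← integral_const_mul]
  refine integral_mono_of_nonneg (ae_of_all _ fun k => ?_)
    (hlam2.integrable_sq.const_mul _) (ae_of_all _ fun k => ?_)
  · exact sub_nonneg.2 (bogoliubovEnergy_le hα.le hx (hlam k))
  · have hε := eps_nonneg k
    have hb : 0 ≤ x * lam k := mul_nonneg hx (hlam k)
    calc eps k - α + x * lam k - bogoliubovEnergy lam α x k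
        ≤ (x * lam k) ^ 2 / (eps k - α) := by
          rw [bogoliubovEnergy, mul_assoc 2]
          exact add_sub_sqrt_mul_add_two_mul_le (by linarith) hb
      _ ≤ (x * lam k) ^ 2 / (-α) := by gcongr <;> linarith
      _ = x ^ 2 / (-α) * lam k ^ 2 := by ring

lemma p0B_le (hβ : 0 < β) (hα : α < 0) (hx : 0 ≤ x) (hlam : ∀ k, 0 ≤ lam k)
    (hlam2 : MemLp lam 2 volume) :
    p0B lam β α x ≤ α * x
      + (β * (2 * π) ^ 3)⁻¹ * ((∫ k, exp (-(β * eps k))) / (1 - exp (β * α)))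
      + (2 * (2 * π) ^ 3)⁻¹ * (x ^ 2 / (-α) * ∫ k, lam k ^ 2) := by
  rw [p0B_eq]
  gcongr
  · exact integral_neg_log_le hβ hα hx hlam
  · exact integral_groundState_le hα hx hlam hlam2

end Bogoliubov

-- The `min` with `0` accounts for `sSup` of a set not bounded above being `0`.
lemma min_le_f0B (lam : EuclideanSpace ℝ (Fin 3) → ℝ) (β y x : ℝ) {α : ℝ} (hα : α ≤ 0) :
    min 0 (α * (y + x) - p0B lam β α x) ≤ f0B lam β y x := by
  by_cases hbdd : BddAbove {v : ℝ | ∃ α ≤ (0 : ℝ), v = α * (y + x) - p0B lam β α x}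
  · exact (min_le_right _ _).trans (le_csSup hbdd ⟨α, hα, rfl⟩)
  · rw [f0B, Real.sSup_of_not_bddAbove hbdd]
    exact min_le_left _ _

lemma f0B_zero_zero_nonpos {lam : EuclideanSpace ℝ (Fin 3) → ℝ} {β : ℝ} (hβ : 0 ≤ β)
    (hlam : ∀ k, 0 ≤ lam k) : f0B lam β 0 0 ≤ 0 := by
  refine Real.sSup_nonpos ?_
  rintro v ⟨α, hα, rfl⟩
  have := mul_le_p0B hβ hα le_rfl hlam
  linarith

lemma exists_neg_f0B_le {lam : EuclideanSpace ℝ (Fin 3) → ℝ} {β δ : ℝ} (hβ : 0 < β)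
    (hlam : ∀ k, 0 ≤ lam k) (hlam2 : MemLp lam 2 volume) (hδ : 0 < δ) :
    ∃ a ≥ (0 : ℝ), ∃ C : ℝ, ∀ x ≥ (0 : ℝ), ∀ y ≥ (0 : ℝ),
      -f0B lam β y x ≤ a * y + C + δ * x ^ 2 := by
  set L := ∫ k, lam k ^ 2
  set c := (2 * (2 * π) ^ 3)⁻¹
  have hL : 0 ≤ L := integral_nonneg fun k => sq_nonneg _
  have hc : 0 ≤ c := by positivity
  set a := c * L / δ + 1
  have ha : 0 < a := by positivity
  have hcLa : c * L / a ≤ δ := by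
    rw [div_le_iff₀ ha, mul_add, mul_div_cancel₀ _ hδ.ne']
    linarith
  set C := (β * (2 * π) ^ 3)⁻¹ * ((∫ k, exp (-(β * eps k))) / (1 - exp (β * -a)))
  have hC : 0 ≤ C := by
    have : 0 < 1 - exp (β * -a) := sub_pos.2 (exp_lt_one_iff.2 (by nlinarith))
    have : 0 ≤ ∫ k, exp (-(β * eps k)) := integral_nonneg fun k => (exp_pos _).le
    positivity
  refine ⟨a, ha.le, C, fun x hx y hy => ?_⟩
  have hp := p0B_le hβ (neg_lt_zero.2 ha) hx hlam hlam2
  rw [neg_neg] at hp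
  have hground : c * (x ^ 2 / a * L) ≤ δ * x ^ 2 := by
    calc c * (x ^ 2 / a * L) = c * L / a * x ^ 2 := by ring
      _ ≤ δ * x ^ 2 := by gcongr
  have hmin : -(a * y + C + δ * x ^ 2) ≤ min 0 (-a * (y + x) - p0B lam β (-a) x) :=
    le_min (by nlinarith) (by linarith)
  linarith [min_le_f0B lam β y x (neg_nonpos.2 ha.le)]

lemma exists_forall_ge_mul_add_sub_mul_sq_le_neg {l : ℝ} (hl : 0 < l) (K C : ℝ) :
    ∃ M > (0 : ℝ), ∀ s ≥ M, K * s + C - l * s ^ 2 ≤ -s := by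
  refine ⟨max 1 ((|K| + |C| + 1) / l), by positivity, fun s hs => ?_⟩
  have hs1 : 1 ≤ s := (le_max_left _ _).trans hs
  have hls : |K| + |C| + 1 ≤ l * s := by
    rw [← div_le_iff₀' hl]
    exact (le_max_right _ _).trans hs
  nlinarith [le_abs_self K, le_abs_self C, abs_nonneg C]

theorem stmt_7_general (lam : EuclideanSpace ℝ (Fin 3) → ℝ)
    (hlam0 : 0 < lam 0)
    (hlam_bd : ∀ k, 0 ≤ lam k ∧ lam k ≤ lam 0) (hlamL2 : MemLp lam 2 volume)
    (β μ : ℝ) (hβ : 0 < β) :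
    ∃ M > (0 : ℝ), ∃ B > (0 : ℝ),
      (∀ x ≥ M, ∀ y ≥ M,
        μ * (y + x) - f0B lam β y x - lam 0 / 2 * (y + x) ^ 2 ≤ -B * (y + x)) ∧
      (∀ xm ≥ (0 : ℝ), ∀ ym ≥ (0 : ℝ),
        (∀ x ≥ (0 : ℝ), ∀ y ≥ (0 : ℝ),
          μ * (y + x) - f0B lam β y x - lam 0 / 2 * (y + x) ^ 2
            ≤ μ * (ym + xm) - f0B lam β ym xm - lam 0 / 2 * (ym + xm) ^ 2) →
        xm < M ∧ ym < M) := by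
  have hlam k : 0 ≤ lam k := (hlam_bd k).1
  obtain ⟨a, ha, C, hf⟩ := exists_neg_f0B_le hβ hlam hlamL2 (δ := lam 0 / 4) (by positivity)
  obtain ⟨M, hM, hquad⟩ :=
    exists_forall_ge_mul_add_sub_mul_sq_le_neg (l := lam 0 / 4) (by positivity) (|μ| + a) C
  have hdecay : ∀ x ≥ (0 : ℝ), ∀ y ≥ (0 : ℝ), M ≤ y + x →
      μ * (y + x) - f0B lam β y x - lam 0 / 2 * (y + x) ^ 2 ≤ -(y + x) := by
    intro x hx y hy hs
    have hμ : μ * (y + x) ≤ |μ| * (y + x) :=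
      mul_le_mul_of_nonneg_right (le_abs_self μ) (by linarith)
    nlinarith [hf x hx y hy, hquad _ hs, mul_nonneg ha hx, mul_nonneg hy hx, sq_nonneg y]
  refine ⟨M, hM, 1, one_pos, fun x hx y hy => ?_, fun xm hxm ym hym hmax => ?_⟩
  · linarith [hdecay x (by linarith) y (by linarith) (by linarith)]
  · by_contra hout
    have hs : M ≤ ym + xm := by
      rcases not_and_or.1 hout with h | h <;> linarith [not_lt.1 h]
    have h0 := hmax 0 le_rfl 0 le_rfl
    norm_num at h0
    linarith [hdecay xm hxm ym hym hs, f0B_zero_zero_nonpos hβ.le hlam]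

/-- Superstability bound: there are `M, B > 0` such that the functional
`(x,y) ↦ μ(y+x) − f₀ᴮ(β,y,x) − (λ₀/2)(y+x)²` (with `λ₀ = λ(0)`) is `≤ −B(y+x)` for
`x, y ≥ M`, and every maximizer lies in `[0,M) × [0,M)`. -/
theorem stmt_7 (lam : EuclideanSpace ℝ (Fin 3) → ℝ)
    (hlam_cont : Continuous lam) (hlam0 : 0 < lam 0)
    (hlam_bd : ∀ k, 0 ≤ lam k ∧ lam k ≤ lam 0) (hlamL2 : MemLp lam 2 volume)
    (β μ : ℝ) (hβ : 0 < β) :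
    ∃ M > (0 : ℝ), ∃ B > (0 : ℝ),
      (∀ x ≥ M, ∀ y ≥ M,
        μ * (y + x) - f0B lam β y x - lam 0 / 2 * (y + x) ^ 2 ≤ -B * (y + x)) ∧
      (∀ xm ≥ (0 : ℝ), ∀ ym ≥ (0 : ℝ),
        (∀ x ≥ (0 : ℝ), ∀ y ≥ (0 : ℝ),
          μ * (y + x) - f0B lam β y x - lam 0 / 2 * (y + x) ^ 2
            ≤ μ * (ym + xm) - f0B lam β ym xm - lam 0 / 2 * (ym + xm) ^ 2) →
        xm < M ∧ ym < M) :=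
  stmt_7_general lam hlam0 hlam_bd hlamL2 β μ hβ
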